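/- arXiv:0908.1586 — 5 statements merged into one kernel-verified Lean document; each statement's English description precedes it below -/
import Mathlib

section
/- Let V ⊆ ℝ_max^n be a finitely generated max-plus cone with full support. Then V is the intersection of finitely many half-spaces each of which is minimal with respect to V. -/
noncomputable section

/-- The max-plus (tropical) semiring `ℝ ∪ {-∞}`:
addition is `max`, multiplication is `+` (with `-∞` absorbing). -/
abbrev Rmax : Type := WithBot ℝ

/-- A max-plus (tropical) cone: a set stable under max-plus linear combinations. -/
def IsTropCone {ι : Type} (V : Set (ι → Rmax)) : Prop :=
  ∀ u ∈ V, ∀ w ∈ V, ∀ lam mu : Rmax, (fun i => max (lam + u i) (mu + w i)) ∈ V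

/-- `tropCone X`: the set of all max-plus linear combinations of finitely many
elements of `X`. -/
def tropCone {ι : Type} (X : Set (ι → Rmax)) : Set (ι → Rmax) :=
  {x | ∃ (m : ℕ) (lam : Fin m → Rmax) (w : Fin m → ι → Rmax),
        (∀ s, w s ∈ X) ∧ x = fun i => Finset.univ.sup (fun s => lam s + w s i)}

/-- `tropCo X`: max-plus convex combinations (coefficients with maximum `0 = 𝟙`)
of finitely many elements of `X`. -/
def tropCo {ι : Type} (X : Set (ι → Rmax)) : Set (ι → Rmax) :=
  {x | ∃ (m : ℕ) (lam : Fin m → Rmax) (w : Fin m → ι → Rmax),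
        (∀ s, w s ∈ X) ∧ Finset.univ.sup lam = (0 : Rmax) ∧
        x = fun i => Finset.univ.sup (fun s => lam s + w s i)}

/-- Max-plus Minkowski sum of two subsets. -/
def tropSum {ι : Type} (A B : Set (ι → Rmax)) : Set (ι → Rmax) :=
  {z | ∃ a ∈ A, ∃ b ∈ B, z = fun i => max (a i) (b i)}

/-- A half-space of `ℝ_max^ι`. -/
def IsHalfSpace {ι : Type} [Fintype ι] (H : Set (ι → Rmax)) : Prop :=
  ∃ a b : ι → Rmax,
    H = {x | Finset.univ.sup (fun i => a i + x i) ≤ Finset.univ.sup (fun j => b j + x j)}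

/-- An affine half-space of `ℝ_max^ι`. -/
def IsAffineHalfSpace {ι : Type} [Fintype ι] (H : Set (ι → Rmax)) : Prop :=
  ∃ (a b : ι → Rmax) (c d : Rmax),
    H = {x | max (Finset.univ.sup (fun i => a i + x i)) c ≤
             max (Finset.univ.sup (fun j => b j + x j)) d}

/-- A max-plus polyhedron: an intersection of finitely many affine half-spaces. -/
def IsPolyhedron {ι : Type} [Fintype ι] (C : Set (ι → Rmax)) : Prop :=
  ∃ (m : ℕ) (H : Fin m → Set (ι → Rmax)),
    (∀ k, IsAffineHalfSpace (H k)) ∧ C = ⋂ k, H k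

/-- The recession cone of a max-plus convex set. -/
def recessionCone {ι : Type} (C : Set (ι → Rmax)) : Set (ι → Rmax) :=
  {u | ∃ x ∈ C, ∀ lam : Rmax, (fun i => max (x i) (lam + u i)) ∈ C}

/-- A half-space minimal (for inclusion) among the half-spaces containing `V`. -/
def IsMinimalHalfSpace {ι : Type} [Fintype ι] (V H : Set (ι → Rmax)) : Prop :=
  IsHalfSpace H ∧ V ⊆ H ∧ ¬ ∃ H', IsHalfSpace H' ∧ V ⊆ H' ∧ H' ⊂ H

/-- The half-space written in normal form: `max_{i ∈ I} (a i + x i) ≤ max_{j ∈ J} (a j + x j)`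
(the sup over an empty index set being `⊥ = -∞`). -/
def halfSpace {ι : Type} (I J : Finset ι) (a : ι → ℝ) : Set (ι → Rmax) :=
  {x | I.sup (fun i => ((a i : Rmax)) + x i) ≤ J.sup (fun j => ((a j : Rmax)) + x j)}

/-- The max-plus cone generated by the vectors `v 0, …, v (p-1)` (finite entries). -/
def genCone {ι : Type} [Fintype ι] {p : ℕ} (v : Fin p → ι → ℝ) : Set (ι → Rmax) :=
  {x | ∃ lam : Fin p → Rmax, x = fun i => Finset.univ.sup (fun r => lam r + ((v r i : Rmax)))}

/-- `S_j(x)`: the `j`-th component of the type of `x` relative to the generators `v`. -/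
def typeSet {ι : Type} {p : ℕ} (v : Fin p → ι → ℝ) (x : ι → ℝ) (j : ι) : Set (Fin p) :=
  {r | v r j - x j = ⨆ k, (v r k - x k)}

/-- `V` has full support. -/
def HasFullSupport {ι : Type} (V : Set (ι → Rmax)) : Prop :=
  ∀ k : ι, ∃ v ∈ V, v k ≠ ⊥

/-- `x` is a vertex of the natural cell decomposition induced by the generators `v`:
the cell of `type(x)` consists exactly of the (finite) scalar multiples of `x`. -/
def IsVertex {ι : Type} {p : ℕ} (v : Fin p → ι → ℝ) (x : ι → ℝ) : Prop :=
  {y : ι → ℝ | ∀ j, typeSet v x j ⊆ typeSet v y j} = {y | ∃ c : ℝ, y = fun i => c + x i}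

/-- The `i`-th max-plus unit vector. -/
def unitVec {ι : Type} [DecidableEq ι] (i : ι) : ι → Rmax :=
  fun k => if k = i then (0 : Rmax) else ⊥

/-- The vector `⊕_{j ∈ J} b j ⊙ e^j`. -/
def jVec {ι : Type} [DecidableEq ι] (J : Finset ι) (b : ι → ℝ) : ι → Rmax :=
  fun k => if k ∈ J then ((b k : Rmax)) else ⊥

/-- The polar of a max-plus cone: the set of (pairs defining) half-spaces containing it. -/
def polar {ι : Type} [Fintype ι] (V : Set (ι → Rmax)) : Set ((ι → Rmax) × (ι → Rmax)) :=
  {q | ∀ x ∈ V, Finset.univ.sup (fun i => q.1 i + x i) ≤ Finset.univ.sup (fun j => q.2 j + x j)}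

/-- Extreme vector of a max-plus cone of pairs (e.g. the polar). -/
def IsExtremePair {ι : Type} (W : Set ((ι → Rmax) × (ι → Rmax)))
    (z : (ι → Rmax) × (ι → Rmax)) : Prop :=
  z ∈ W ∧ z ≠ (fun _ => (⊥ : Rmax), fun _ => (⊥ : Rmax)) ∧
    ∀ u ∈ W, ∀ w ∈ W,
      z = (fun i => max (u.1 i) (w.1 i), fun i => max (u.2 i) (w.2 i)) → z = u ∨ z = w

/-- Extreme point of a max-plus convex set. -/
def IsExtremePoint {ι : Type} (C : Set (ι → Rmax)) (z : ι → Rmax) : Prop :=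
  z ∈ C ∧ ∀ u ∈ C, ∀ w ∈ C, ∀ lam mu : Rmax, max lam mu = (0 : Rmax) →
    z = (fun i => max (lam + u i) (mu + w i)) → z = u ∨ z = w

/-- Extreme vector of a max-plus cone. -/
def IsExtremeVector {ι : Type} (W : Set (ι → Rmax)) (z : ι → Rmax) : Prop :=
  z ∈ W ∧ z ≠ (fun _ => (⊥ : Rmax)) ∧
    ∀ u ∈ W, ∀ w ∈ W, z = (fun i => max (u i) (w i)) → z = u ∨ z = w

/-- Projection of a subset of `ℝ_max^ι` onto the coordinates indexed by `K`. -/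
def projCone {ι : Type} (K : Finset ι) (V : Set (ι → Rmax)) :
    Set ({k : ι // k ∈ K} → Rmax) :=
  {y | ∃ x ∈ V, y = fun k => x k.1}

/-!
Write `V` as generated by finitely many vectors `w r` with nonempty support. A vector `x` lies
in `V` iff it is dominated by its residuation `⊕_r (min_k (x k - w r k)) ⊙ w r`; distributing
the maximum over the minima expresses `V` as a finite intersection of half-spaces. Each of them
is then shrunk to a minimal half-space containing `V`. By Zorn's lemma this needs the
intersection of a chain of half-spaces containing `V` to be a half-space. Written in the normal
form `max_{i ∈ I} (a i + x i) ≤ max_{j ∈ J} (a j + x j)` with `I`, `J` disjoint, a coinitial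
subchain has fixed `I` and `J`; along it the differences `a i - a j` increase, full support of
`V` keeps them bounded exactly for the `j` in some `J₁ ⊆ J`, and their suprema form a rank-one
matrix `c i - c j`, so the intersection is the half-space with coefficients `c` on `I` and `J₁`.
-/

section HalfSpace

variable {ι : Type}

lemma HasFullSupport.mono {V W : Set (ι → Rmax)} (hV : HasFullSupport V) (hVW : V ⊆ W) :
    HasFullSupport W := fun k =>
  let ⟨v, hv, hvk⟩ := hV k
  ⟨v, hVW hv, hvk⟩

lemma coe_unbotD_of_ne_bot {α : Type*} {x : WithBot α} (hx : x ≠ ⊥) (d : α) :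
    ((x.unbotD d : α) : WithBot α) = x := by
  lift x to α using hx
  rfl

lemma coe_le_finsetSup_add_iff {J : Finset ι} {b : ι → ℝ} {x : ι → Rmax} {r : ℝ} :
    (r : Rmax) ≤ J.sup (fun j => (b j : Rmax) + x j) ↔
      ∃ j ∈ J, ∃ xj : ℝ, x j = xj ∧ r ≤ b j + xj := by
  rw [Finset.le_sup_iff (WithBot.bot_lt_coe r)]
  refine exists_congr fun j => and_congr_right fun _ => ?_
  induction x j using WithBot.recBotCoe with
  | bot => simp
  | coe xj => simp [← WithBot.coe_add]

lemma mem_halfSpace_iff {I J : Finset ι} {a : ι → ℝ} {x : ι → Rmax} :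
    x ∈ halfSpace I J a ↔
      ∀ i ∈ I, ∀ xi : ℝ, x i = xi → ∃ j ∈ J, ∃ xj : ℝ, x j = xj ∧ a i - a j ≤ xj - xi := by
  simp only [halfSpace, Set.mem_ofPred_eq, Finset.sup_le_iff]
  refine forall₂_congr fun i _ => ?_
  induction x i using WithBot.recBotCoe with
  | bot => simp
  | coe xi =>
    rw [← WithBot.coe_add, coe_le_finsetSup_add_iff]
    simp only [WithBot.coe_inj, forall_eq']
    refine exists_congr fun j => and_congr_right fun _ => exists_congr fun xj =>
      and_congr_right fun _ => ?_
    constructor <;> intro h <;> linarith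

lemma sub_le_sub_of_halfSpace_subset {I J : Finset ι} (hIJ : Disjoint I J) {a a' : ι → ℝ}
    (h : halfSpace I J a' ⊆ halfSpace I J a) {i j : ι} (hi : i ∈ I) (hj : j ∈ J) :
    a i - a j ≤ a' i - a' j := by
  classical
  set x : ι → Rmax := fun k => if k = i ∨ k = j then ((-a' k : ℝ) : Rmax) else ⊥
  have hxI : ∀ i' ∈ I, ∀ xi : ℝ, x i' = xi → i' = i ∧ xi = -a' i := by
    intro i' hi' xi hxi
    have hi'j : i' ≠ j := fun h => Finset.disjoint_left.mp hIJ hi' (h ▸ hj)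
    by_cases hi'i : i' = i
    · subst hi'i; simpa [x, eq_comm] using hxi
    · simp [x, hi'i, hi'j] at hxi
  have hxJ : ∀ j' ∈ J, ∀ xj : ℝ, x j' = xj → j' = j ∧ xj = -a' j := by
    intro j' hj' xj hxj
    have hj'i : j' ≠ i := fun h => Finset.disjoint_left.mp hIJ (h ▸ hi) hj'
    by_cases hj'j : j' = j
    · subst hj'j; simpa [x, eq_comm] using hxj
    · simp [x, hj'i, hj'j] at hxj
  have hx : x ∈ halfSpace I J a' := by
    refine mem_halfSpace_iff.mpr fun i' hi' xi hxi => ?_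
    obtain ⟨rfl, rfl⟩ := hxI i' hi' xi hxi
    exact ⟨j, hj, -a' j, by simp [x], by linarith⟩
  obtain ⟨j', hj', xj, hxj, hle⟩ := mem_halfSpace_iff.mp (h hx) i hi (-a' i) (by simp [x])
  obtain ⟨rfl, rfl⟩ := hxJ j' hj' xj hxj
  linarith

end HalfSpace

section NormalForm

variable {ι : Type} [Fintype ι]

lemma finsetSup_ite_mem_add [DecidableEq ι] (I : Finset ι) (b x : ι → Rmax) :
    (Finset.univ.sup fun k => (if k ∈ I then b k else ⊥) + x k) = I.sup fun k => b k + x k :=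
  eq_of_forall_ge_iff fun c => by simp [Finset.sup_le_iff, ite_add, apply_ite (· ≤ c)]

lemma isHalfSpace_halfSpace (I J : Finset ι) (a : ι → ℝ) : IsHalfSpace (halfSpace I J a) := by
  classical
  refine ⟨fun k => if k ∈ I then (a k : Rmax) else ⊥, fun k => if k ∈ J then (a k : Rmax) else ⊥,
    Set.ext fun x => ?_⟩
  simp only [halfSpace, Set.mem_ofPred_eq, finsetSup_ite_mem_add]

lemma finsetSup_add_le_finsetSup_add_iff (α β x : ι → Rmax) :
    (Finset.univ.sup fun i => α i + x i) ≤ (Finset.univ.sup fun j => β j + x j) ↔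
      ((Finset.univ.filter fun k => β k < α k).sup fun i => α i + x i) ≤
        (Finset.univ.filter fun k => α k ≤ β k ∧ β k ≠ ⊥).sup fun j => β j + x j := by
  set I := Finset.univ.filter fun k => β k < α k
  set J := Finset.univ.filter fun k => α k ≤ β k ∧ β k ≠ ⊥
  set P := Finset.univ.sup fun i => α i + x i
  set Q := Finset.univ.sup fun j => β j + x j
  have hPI : (I.sup fun i => α i + x i) ≤ P := Finset.sup_mono (Finset.subset_univ I)
  have hQJ : (J.sup fun j => β j + x j) ≤ Q := Finset.sup_mono (Finset.subset_univ J)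
  constructor
  · intro hPQ
    rcases eq_bot_or_bot_lt Q with hQ | hQ
    · exact (hPI.trans (hPQ.trans hQ.le)).trans bot_le
    obtain ⟨k, -, hk⟩ := (Finset.le_sup_iff hQ).mp le_rfl
    have hk_ne : β k + x k ≠ ⊥ := (hQ.trans_le hk).ne'
    have hkJ : k ∈ J := by
      refine Finset.mem_filter.mpr ⟨Finset.mem_univ k, not_lt.mp fun hlt => ?_,
        fun h => hk_ne (by rw [h, WithBot.bot_add])⟩
      have hxk : x k ≠ ⊥ := fun h => hk_ne (by rw [h, WithBot.add_bot])
      exact lt_irrefl _ ((WithBot.add_lt_add_right hxk hlt).trans_le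
        ((Finset.le_sup (Finset.mem_univ k)).trans (hPQ.trans hk)))
    exact hPI.trans (hPQ.trans (hk.trans (Finset.le_sup (f := fun j => β j + x j) hkJ)))
  · intro hIJ
    refine (Finset.sup_le fun k _ => ?_).trans (sup_le hIJ le_rfl |>.trans hQJ)
    by_cases hkI : k ∈ I
    · exact le_sup_of_le_left (Finset.le_sup (f := fun i => α i + x i) hkI)
    have hle : α k ≤ β k := not_lt.mp fun h => hkI (Finset.mem_filter.mpr ⟨Finset.mem_univ k, h⟩)
    by_cases hβ : β k = ⊥
    · have hα : α k = ⊥ := le_bot_iff.mp (hβ ▸ hle)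
      rw [hα, WithBot.bot_add]
      exact bot_le
    · exact le_sup_of_le_right ((add_le_add_left hle (x k)).trans
        (Finset.le_sup (f := fun j => β j + x j)
          (Finset.mem_filter.mpr ⟨Finset.mem_univ k, hle, hβ⟩)))

lemma IsHalfSpace.exists_disjoint_halfSpace_eq {H : Set (ι → Rmax)} (hH : IsHalfSpace H) :
    ∃ (I J : Finset ι) (a : ι → ℝ), Disjoint I J ∧ H = halfSpace I J a := by
  classical
  obtain ⟨α, β, rfl⟩ := hH
  set I := Finset.univ.filter fun k => β k < α k
  set J := Finset.univ.filter fun k => α k ≤ β k ∧ β k ≠ ⊥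
  have hJI : ∀ j ∈ J, j ∉ I := fun j hj hi =>
    (Finset.mem_filter.mp hj).2.1.not_gt (Finset.mem_filter.mp hi).2
  refine ⟨I, J, fun k => if k ∈ I then (α k).unbotD 0 else (β k).unbotD 0,
    Finset.disjoint_right.mpr hJI, Set.ext fun x => ?_⟩
  have hI : I.sup (fun i => ((if i ∈ I then (α i).unbotD 0 else (β i).unbotD 0 : ℝ) : Rmax) + x i)
      = I.sup fun i => α i + x i := by
    refine Finset.sup_congr rfl fun i hi => ?_
    rw [if_pos hi, coe_unbotD_of_ne_bot (Finset.mem_filter.mp hi).2.ne_bot]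
  have hJ : J.sup (fun j => ((if j ∈ I then (α j).unbotD 0 else (β j).unbotD 0 : ℝ) : Rmax) + x j)
      = J.sup fun j => β j + x j := by
    refine Finset.sup_congr rfl fun j hj => ?_
    rw [if_neg (hJI j hj), coe_unbotD_of_ne_bot (Finset.mem_filter.mp hj).2.2]
  simp only [halfSpace, Set.mem_ofPred_eq, hI, hJ]
  exact finsetSup_add_le_finsetSup_add_iff α β x

end NormalForm

section DirectedFamily

variable {τ : Type}

lemma ciSup_add_of_directed [Nonempty τ] {r : τ → τ → Prop} (hr : ∀ s t, ∃ u, r s u ∧ r t u)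
    {f g : τ → ℝ} (hf : ∀ s t, r s t → f s ≤ f t) (hg : ∀ s t, r s t → g s ≤ g t)
    (hfb : BddAbove (Set.range f)) (hgb : BddAbove (Set.range g)) :
    ⨆ t, (f t + g t) = (⨆ t, f t) + ⨆ t, g t := by
  have hfgb : BddAbove (Set.range fun t => f t + g t) := by
    obtain ⟨M, hM⟩ := hfb
    obtain ⟨N, hN⟩ := hgb
    exact ⟨M + N, Set.forall_mem_range.mpr fun t =>
      add_le_add (hM (Set.mem_range_self t)) (hN (Set.mem_range_self t))⟩
  refine le_antisymm (ciSup_le fun t => add_le_add (le_ciSup hfb t) (le_ciSup hgb t)) ?_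
  refine le_sub_iff_add_le.mp (ciSup_le fun s => le_sub_comm.mp (ciSup_le fun t => ?_))
  refine le_sub_iff_add_le'.mpr ?_
  obtain ⟨u, hsu, htu⟩ := hr s t
  exact (add_le_add (hf s u hsu) (hg t u htu)).trans (le_ciSup hfgb u)

lemma forall_le_iff_bddAbove_and_ciSup_le [Nonempty τ] {f : τ → ℝ} {y : ℝ} :
    (∀ t, f t ≤ y) ↔ BddAbove (Set.range f) ∧ ⨆ t, f t ≤ y :=
  ⟨fun h => ⟨⟨y, Set.forall_mem_range.mpr h⟩, ciSup_le h⟩,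
    fun h t => (le_ciSup h.1 t).trans h.2⟩

variable {ι : Type} {I J : Finset ι} {a : τ → ι → ℝ}

lemma mem_iInter_halfSpace_iff [Nonempty τ] (hIJ : Disjoint I J)
    (hdir : Directed (· ⊇ ·) fun t => halfSpace I J (a t)) {x : ι → Rmax} :
    x ∈ ⋂ t, halfSpace I J (a t) ↔
      ∀ i ∈ I, ∀ xi : ℝ, x i = xi →
        ∃ j ∈ J, ∃ xj : ℝ, x j = xj ∧ ∀ t, a t i - a t j ≤ xj - xi := by
  classical
  constructor
  · intro hx i hi xi hxi
    by_contra! hcon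
    choose! g hg using hcon
    obtain ⟨u, hu⟩ := hdir.finset_le (J.image fun j => g j ((x j).unbotD 0))
    obtain ⟨j, hj, xj, hxj, hle⟩ :=
      mem_halfSpace_iff.mp (Set.mem_iInter.mp hx u) i hi xi hxi
    have hsub := hu _ (Finset.mem_image_of_mem _ hj)
    rw [hxj, WithBot.unbotD_coe] at hsub
    have := sub_le_sub_of_halfSpace_subset hIJ hsub hi hj
    linarith [hg j hj xj hxj]
  · intro h
    refine Set.mem_iInter.mpr fun t => mem_halfSpace_iff.mpr fun i hi xi hxi => ?_
    obtain ⟨j, hj, xj, hxj, hle⟩ := h i hi xi hxi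
    exact ⟨j, hj, xj, hxj, hle t⟩

lemma ciSup_sub_add_ciSup_sub [Nonempty τ] (hIJ : Disjoint I J)
    (hdir : Directed (· ⊇ ·) fun t => halfSpace I J (a t)) {i i' j j' : ι}
    (hi : i ∈ I) (hi' : i' ∈ I) (hj : j ∈ J) (hj' : j' ∈ J)
    (hij : BddAbove (Set.range fun t => a t i - a t j))
    (hi'j' : BddAbove (Set.range fun t => a t i' - a t j'))
    (hij' : BddAbove (Set.range fun t => a t i - a t j'))
    (hi'j : BddAbove (Set.range fun t => a t i' - a t j)) :
    (⨆ t, (a t i - a t j)) + ⨆ t, (a t i' - a t j') =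
      (⨆ t, (a t i - a t j')) + ⨆ t, (a t i' - a t j) := by
  have hmono : ∀ {k l}, k ∈ I → l ∈ J → ∀ s t, halfSpace I J (a t) ⊆ halfSpace I J (a s) →
      a s k - a s l ≤ a t k - a t l :=
    fun hk hl _ _ h => sub_le_sub_of_halfSpace_subset hIJ h hk hl
  rw [← ciSup_add_of_directed hdir (hmono hi hj) (hmono hi' hj') hij hi'j',
    ← ciSup_add_of_directed hdir (hmono hi hj') (hmono hi' hj) hij' hi'j]
  exact congrArg _ (funext fun t => by ring)

lemma exists_bddAbove_of_hasFullSupport [Nonempty τ] (hIJ : Disjoint I J)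
    (hdir : Directed (· ⊇ ·) fun t => halfSpace I J (a t))
    (hsupp : HasFullSupport (⋂ t, halfSpace I J (a t))) {i : ι} (hi : i ∈ I) :
    ∃ j ∈ J, BddAbove (Set.range fun t => a t i - a t j) := by
  obtain ⟨x, hx, hxi⟩ := hsupp i
  obtain ⟨xi, hxi⟩ := WithBot.ne_bot_iff_exists.mp hxi
  obtain ⟨j, hj, xj, -, hle⟩ := (mem_iInter_halfSpace_iff hIJ hdir).mp hx i hi xi hxi.symm
  exact ⟨j, hj, xj - xi, Set.forall_mem_range.mpr hle⟩

/-- `a t i' - a t j = (a t i' - a t j') + (a t i - a t j) - (a t i - a t j')`, and the last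
difference is bounded below by its value at `t₀`. -/
lemma bddAbove_range_sub_of_bddAbove (hIJ : Disjoint I J) {t₀ : τ}
    (h₀ : ∀ t, halfSpace I J (a t) ⊆ halfSpace I J (a t₀)) {i i' j j' : ι} (hi : i ∈ I)
    (hj' : j' ∈ J) (hij : BddAbove (Set.range fun t => a t i - a t j))
    (hi'j' : BddAbove (Set.range fun t => a t i' - a t j')) :
    BddAbove (Set.range fun t => a t i' - a t j) := by
  obtain ⟨M, hM⟩ := hij
  obtain ⟨M', hM'⟩ := hi'j'
  refine ⟨M' + M - (a t₀ i - a t₀ j'), Set.forall_mem_range.mpr fun t => ?_⟩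
  have h1 := hM (Set.mem_range_self t)
  have h2 := hM' (Set.mem_range_self t)
  have h3 := sub_le_sub_of_halfSpace_subset hIJ (h₀ t) hi hj'
  linarith

theorem iInter_halfSpace_eq_halfSpace (hIJ : Disjoint I J)
    (hdir : Directed (· ⊇ ·) fun t => halfSpace I J (a t))
    (t₀ : τ) (h₀ : ∀ t, halfSpace I J (a t) ⊆ halfSpace I J (a t₀))
    (hsupp : HasFullSupport (⋂ t, halfSpace I J (a t))) :
    ∃ (J₁ : Finset ι) (c : ι → ℝ), ⋂ t, halfSpace I J (a t) = halfSpace I J₁ c := by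
  classical
  have : Nonempty τ := ⟨t₀⟩
  set B : ι → ι → Prop := fun i j => BddAbove (Set.range fun t => a t i - a t j)
  set D : ι → ι → ℝ := fun i j => ⨆ t, (a t i - a t j)
  have hmem : ∀ x, x ∈ ⋂ t, halfSpace I J (a t) ↔ ∀ i ∈ I, ∀ xi : ℝ, x i = xi →
      ∃ j ∈ J, ∃ xj : ℝ, x j = xj ∧ B i j ∧ D i j ≤ xj - xi := by
    intro x
    simp only [mem_iInter_halfSpace_iff hIJ hdir, forall_le_iff_bddAbove_and_ciSup_le, B, D]
  have hB : ∀ i ∈ I, ∃ j ∈ J, B i j := fun i hi =>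
    exists_bddAbove_of_hasFullSupport hIJ hdir hsupp hi
  rcases I.eq_empty_or_nonempty with rfl | ⟨i₀, hi₀⟩
  · exact ⟨∅, 0, Set.ext fun x => by simp [hmem, mem_halfSpace_iff]⟩
  obtain ⟨j₀, hj₀, hB₀⟩ := hB i₀ hi₀
  have hBiff : ∀ i ∈ I, ∀ j ∈ J, B i j ↔ B i₀ j := by
    intro i hi j hj
    refine ⟨fun h => bddAbove_range_sub_of_bddAbove hIJ h₀ hi hj₀ h hB₀, fun h => ?_⟩
    obtain ⟨j', hj', hB'⟩ := hB i hi
    exact bddAbove_range_sub_of_bddAbove hIJ h₀ hi₀ hj' h hB'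
  set J₁ := J.filter (B i₀)
  set c : ι → ℝ := fun k => if k ∈ I then D k j₀ else D i₀ j₀ - D i₀ k
  have hrank : ∀ i ∈ I, ∀ j ∈ J₁, D i j = c i - c j := by
    intro i hi j hj
    obtain ⟨hjJ, hBj⟩ := Finset.mem_filter.mp hj
    have hsum : D i j + D i₀ j₀ = D i j₀ + D i₀ j :=
      ciSup_sub_add_ciSup_sub hIJ hdir hi hi₀ hjJ hj₀ ((hBiff i hi j hjJ).mpr hBj) hB₀
        ((hBiff i hi j₀ hj₀).mpr hB₀) hBj
    simp only [c, if_pos hi, if_neg (Finset.disjoint_right.mp hIJ hjJ)]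
    linarith
  refine ⟨J₁, c, Set.ext fun x => ?_⟩
  rw [hmem, mem_halfSpace_iff]
  refine forall₂_congr fun i hi => forall₂_congr fun xi _ => ⟨?_, ?_⟩
  · rintro ⟨j, hj, xj, hxj, hBij, hle⟩
    have hj₁ : j ∈ J₁ := Finset.mem_filter.mpr ⟨hj, (hBiff i hi j hj).mp hBij⟩
    exact ⟨j, hj₁, xj, hxj, hrank i hi j hj₁ ▸ hle⟩
  · rintro ⟨j, hj, xj, hxj, hle⟩
    obtain ⟨hjJ, hBj⟩ := Finset.mem_filter.mp hj
    exact ⟨j, hjJ, xj, hxj, (hBiff i hi j hjJ).mpr hBj, hrank i hi j hj ▸ hle⟩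

end DirectedFamily

section Coinitial

variable {α τ : Type}

lemma Directed.exists_cofinal_fiber {β : Type} [Nonempty τ] [Finite β] {r : α → α → Prop}
    [IsTrans α r] {f : τ → α} (hf : Directed r f) (g : τ → β) :
    ∃ b, ∀ t, ∃ u, g u = b ∧ r (f t) (f u) := by
  classical
  by_contra! h
  choose s hs using h
  have := Fintype.ofFinite β
  obtain ⟨z, hz⟩ := hf.finset_le (Finset.univ.image s)
  exact hs (g z) z rfl (hz _ (Finset.mem_image_of_mem s (Finset.mem_univ _)))

variable {H : τ → Set α} {p : τ → Prop}

lemma iInter_subtype_eq_of_coinitial (h : ∀ t, ∃ u, p u ∧ H u ⊆ H t) :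
    ⋂ u : Subtype p, H u = ⋂ t, H t := by
  refine subset_antisymm (Set.subset_iInter fun t => ?_)
    (Set.subset_iInter fun u => Set.iInter_subset _ u.1)
  obtain ⟨u, hu, hut⟩ := h t
  exact (Set.iInter_subset _ ⟨u, hu⟩).trans hut

lemma Directed.subtype_of_coinitial (hdir : Directed (· ⊇ ·) H)
    (h : ∀ t, ∃ u, p u ∧ H u ⊆ H t) : Directed (· ⊇ ·) fun u : Subtype p => H u := by
  intro s t
  obtain ⟨v, hsv, htv⟩ := hdir s t
  obtain ⟨u, hu, huv⟩ := h v
  exact ⟨⟨u, hu⟩, huv.trans hsv, huv.trans htv⟩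

end Coinitial

section Minimal

variable {ι : Type} [Fintype ι]

theorem IsHalfSpace.iInter_of_directed {τ : Type} [Nonempty τ] {H : τ → Set (ι → Rmax)}
    (hdir : Directed (· ⊇ ·) H) (hH : ∀ t, IsHalfSpace (H t))
    (hsupp : HasFullSupport (⋂ t, H t)) : IsHalfSpace (⋂ t, H t) := by
  choose I J a hIJ hHa using fun t => (hH t).exists_disjoint_halfSpace_eq
  obtain ⟨⟨I₀, J₀⟩, hfib⟩ := hdir.exists_cofinal_fiber fun t => (I t, J t)
  obtain ⟨t₀, ht₀, -⟩ := hfib (Classical.arbitrary τ)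
  set p : τ → Prop := fun t => (I t, J t) = (I₀, J₀) ∧ H t ⊆ H t₀
  have hcoinit : ∀ t, ∃ u, p u ∧ H u ⊆ H t := by
    intro t
    obtain ⟨v, htv, ht₀v⟩ := hdir t t₀
    obtain ⟨u, hu, hvu⟩ := hfib v
    exact ⟨u, ⟨hu, hvu.trans ht₀v⟩, hvu.trans htv⟩
  have hHp : ∀ u : Subtype p, H u = halfSpace I₀ J₀ (a u) := by
    rintro ⟨u, hu, -⟩
    obtain ⟨rfl, rfl⟩ := Prod.ext_iff.mp hu
    exact hHa u
  have hsub := iInter_subtype_eq_of_coinitial hcoinit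
  simp only [hHp] at hsub
  have hdir' := hdir.subtype_of_coinitial hcoinit
  simp only [hHp] at hdir'
  obtain ⟨rfl, rfl⟩ := Prod.ext_iff.mp ht₀
  obtain ⟨J₁, c, hc⟩ := iInter_halfSpace_eq_halfSpace (hIJ t₀) hdir' ⟨t₀, rfl, subset_rfl⟩
    (fun u => by rw [← hHp, ← hHp ⟨t₀, rfl, subset_rfl⟩]; exact u.2.2) (hsub ▸ hsupp)
  rw [← hsub, hc]
  exact isHalfSpace_halfSpace _ _ _

theorem IsHalfSpace.sInter_of_isChain {C : Set (Set (ι → Rmax))} (hC : IsChain (· ⊆ ·) C)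
    (hCne : C.Nonempty) (hCH : ∀ H ∈ C, IsHalfSpace H) (hsupp : HasFullSupport (⋂₀ C)) :
    IsHalfSpace (⋂₀ C) := by
  have : Nonempty C := hCne.to_subtype
  have hdir : Directed (· ⊇ ·) (Subtype.val : C → Set (ι → Rmax)) := fun s t =>
    (hC.total s.2 t.2).elim (fun h => ⟨s, subset_rfl, h⟩) fun h => ⟨t, h, subset_rfl⟩
  rw [Set.sInter_eq_iInter] at hsupp ⊢
  exact IsHalfSpace.iInter_of_directed hdir (fun H => hCH H H.2) hsupp

theorem exists_isMinimalHalfSpace_subset {V H : Set (ι → Rmax)} (hV : HasFullSupport V)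
    (hH : IsHalfSpace H) (hVH : V ⊆ H) : ∃ M ⊆ H, IsMinimalHalfSpace V M := by
  obtain ⟨M, hMH, hM⟩ := zorn_superset_nonempty {H | IsHalfSpace H ∧ V ⊆ H}
    (fun C hCS hC hCne =>
      have hVC : V ⊆ ⋂₀ C := Set.subset_sInter fun H hH => (hCS hH).2
      ⟨⋂₀ C, ⟨IsHalfSpace.sInter_of_isChain hC hCne (fun H hH => (hCS hH).1) (hV.mono hVC), hVC⟩,
        fun _ => Set.sInter_subset_of_mem⟩) H ⟨hH, hVH⟩
  refine ⟨M, hMH, hM.prop.1, hM.prop.2, ?_⟩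
  rintro ⟨H', hH', hVH', hH'M⟩
  exact hH'M.not_subset (hM.le_of_le ⟨hH', hVH'⟩ hH'M.subset)

end Minimal

section Residuation

variable {ι : Type} {p : ℕ}

lemma add_coe_neg_add_coe (y : Rmax) (W : ℝ) : y + ((-W : ℝ) : Rmax) + (W : Rmax) = y := by
  rw [add_assoc, ← WithBot.coe_add, neg_add_cancel, WithBot.coe_zero, add_zero]

lemma finsetSup_add {β : Type} (s : Finset β) (f : β → Rmax) (y : Rmax) :
    s.sup f + y = s.sup fun b => f b + y :=
  Finset.apply_sup_eq_sup_comp (· + y) (fun _ _ => (add_left_mono (a := y)).map_max)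
    (WithBot.bot_add y)

/-- Distributing the maximum in `x ≤ ⊕_r (min_k (x k - w r k)) ⊙ w r` over the minima yields
one of these half-spaces for each choice of an index `σ r` in the support of every `w r`. -/
def residuationHalfSpace (w : Fin p → ι → Rmax) (i : ι) (σ : ∀ r, {k // w r k ≠ ⊥}) :
    Set (ι → Rmax) :=
  {x | x i ≤ Finset.univ.sup fun r => w r i + ((-(w r (σ r)).unbot (σ r).2 : ℝ) : Rmax) + x (σ r)}

lemma isHalfSpace_residuationHalfSpace [Fintype ι] (w : Fin p → ι → Rmax) (i : ι)
    (σ : ∀ r, {k // w r k ≠ ⊥}) : IsHalfSpace (residuationHalfSpace w i σ) := by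
  classical
  set c : Fin p → Rmax := fun r => w r i + ((-(w r (σ r)).unbot (σ r).2 : ℝ) : Rmax)
  refine ⟨unitVec i, fun j => Finset.univ.sup fun r => if (σ r : ι) = j then c r else ⊥,
    Set.ext fun x => ?_⟩
  have hl : (Finset.univ.sup fun k => unitVec i k + x k) = x i :=
    eq_of_forall_ge_iff fun C => by simp [unitVec, Finset.sup_le_iff, ite_add, apply_ite (· ≤ C)]
  have hr : (Finset.univ.sup fun j => (Finset.univ.sup fun r => if (σ r : ι) = j then c r else ⊥)
      + x j) = Finset.univ.sup fun r => c r + x (σ r) :=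
    eq_of_forall_ge_iff fun C => by
      simp [finsetSup_add, Finset.sup_le_iff, ite_add, apply_ite (· ≤ C)]
      exact ⟨fun h r => h _ r rfl, fun h _ r hr => hr ▸ h r⟩
  simp only [residuationHalfSpace, Set.mem_ofPred_eq, hl, hr, c]

lemma tropCone_subset_residuationHalfSpace {X : Set (ι → Rmax)} {w : Fin p → ι → Rmax} {i : ι}
    (hX : ∀ u ∈ X, u i ≠ ⊥ → u ∈ Set.range w) (σ : ∀ r, {k // w r k ≠ ⊥}) :
    tropCone X ⊆ residuationHalfSpace w i σ := by
  rintro _ ⟨m, lam, u, hu, rfl⟩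
  simp only [residuationHalfSpace, Set.mem_ofPred_eq]
  refine Finset.sup_le fun s _ => ?_
  by_cases hus : u s i = ⊥
  · rw [hus, WithBot.add_bot]
    exact bot_le
  obtain ⟨r, hr⟩ := hX (u s) (hu s) hus
  set W := (w r (σ r)).unbot (σ r).2
  have hW : (W : Rmax) = u s (σ r) := by rw [← hr]; exact WithBot.coe_unbot _ _
  have hle : lam s + (W : Rmax) ≤ Finset.univ.sup fun s' => lam s' + u s' (σ r) := by
    rw [hW]; exact Finset.le_sup (f := fun s' => lam s' + u s' (σ r)) (Finset.mem_univ s)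
  calc lam s + u s i = w r i + ((-W : ℝ) : Rmax) + (lam s + W) := by
        rw [← hr, show w r i + ((-W : ℝ) : Rmax) + (lam s + W)
          = lam s + w r i + ((-W : ℝ) : Rmax) + W by ac_rfl, add_coe_neg_add_coe]
    _ ≤ w r i + ((-W : ℝ) : Rmax) + Finset.univ.sup fun s' => lam s' + u s' (σ r) :=
        add_le_add_right hle _
    _ ≤ _ := Finset.le_sup (f := fun r => w r i + ((-(w r (σ r)).unbot (σ r).2 : ℝ) : Rmax) +
          Finset.univ.sup fun s' => lam s' + u s' (σ r)) (Finset.mem_univ r)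

/-- The coefficient of `w r` is `min_k (x k - w r k)`, attained at `σ r`. -/
lemma exists_eq_sup_of_forall_mem_residuationHalfSpace [Finite ι] {w : Fin p → ι → Rmax}
    (hw : ∀ r, ∃ k, w r k ≠ ⊥) {x : ι → Rmax}
    (hx : ∀ i σ, x ∈ residuationHalfSpace w i σ) :
    ∃ lam : Fin p → Rmax, x = fun i => Finset.univ.sup fun r => lam r + w r i := by
  have : ∀ r, Nonempty {k // w r k ≠ ⊥} := fun r => (hw r).elim fun k hk => ⟨⟨k, hk⟩⟩
  choose σ hσ using fun r =>
    Finite.exists_min fun k : {k // w r k ≠ ⊥} => x k + ((-(w r k).unbot k.2 : ℝ) : Rmax)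
  refine ⟨fun r => x (σ r) + ((-(w r (σ r)).unbot (σ r).2 : ℝ) : Rmax),
    funext fun i => le_antisymm ((hx i σ).trans (Finset.sup_mono_fun fun r _ => ?_))
      (Finset.sup_le fun r _ => ?_)⟩
  · exact le_of_eq (by dsimp only; ac_rfl)
  by_cases hri : w r i = ⊥
  · rw [hri, WithBot.add_bot]
    exact bot_le
  set W := (w r i).unbot hri
  have hW : w r i = W := (WithBot.coe_unbot _ _).symm
  calc _ ≤ x i + ((-W : ℝ) : Rmax) + w r i := add_le_add_left (hσ r ⟨i, hri⟩) _
    _ = x i := by rw [hW]; exact add_coe_neg_add_coe _ _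

theorem tropCone_eq_iInter_residuationHalfSpace [Finite ι] {X : Set (ι → Rmax)}
    {w : Fin p → ι → Rmax} (hw : Set.range w = {u ∈ X | ∃ k, u k ≠ ⊥}) :
    tropCone X = ⋂ t : ι × ∀ r, {k // w r k ≠ ⊥}, residuationHalfSpace w t.1 t.2 := by
  have hwX : ∀ r, w r ∈ X ∧ ∃ k, w r k ≠ ⊥ := fun r => by
    have := Set.mem_range_self (f := w) r
    rwa [hw] at this
  refine subset_antisymm (Set.subset_iInter fun t => tropCone_subset_residuationHalfSpace
    (fun u hu hui => by rw [hw]; exact ⟨hu, _, hui⟩) t.2) fun x hx => ?_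
  obtain ⟨lam, rfl⟩ := exists_eq_sup_of_forall_mem_residuationHalfSpace (fun r => (hwX r).2)
    fun i σ => Set.mem_iInter.mp hx (i, σ)
  exact ⟨p, lam, w, fun r => (hwX r).1, rfl⟩

end Residuation

/-- a finitely generated max-plus cone with full support is the
intersection of finitely many half-spaces, each minimal with respect to it. -/
theorem stmt_8 {n : ℕ} (V : Set (Fin n → Rmax))
    (hfg : ∃ X : Set (Fin n → Rmax), X.Finite ∧ V = tropCone X)
    (hsupp : HasFullSupport V) :
    ∃ (m : ℕ) (H : Fin m → Set (Fin n → Rmax)),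
      (∀ k, IsMinimalHalfSpace V (H k)) ∧ V = ⋂ k, H k := by
  obtain ⟨X, hX, rfl⟩ := hfg
  obtain ⟨p, w, hw⟩ := (hX.subset (Set.sep_subset X fun u => ∃ k, u k ≠ ⊥)).fin_embedding
  have hV := tropCone_eq_iInter_residuationHalfSpace hw
  choose M hMsub hM using fun t : Fin n × ∀ r, {k // w r k ≠ ⊥} =>
    exists_isMinimalHalfSpace_subset hsupp (isHalfSpace_residuationHalfSpace w t.1 t.2)
      (hV.subset.trans (Set.iInter_subset _ t))
  let e := Finite.equivFin (Fin n × ∀ r, {k // w r k ≠ ⊥})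
  refine ⟨Nat.card _, fun k => M (e.symm k), fun k => hM _, ?_⟩
  rw [e.symm.surjective.iInter_comp M]
  exact subset_antisymm (Set.subset_iInter fun t => (hM t).2.1)
    ((Set.iInter_mono hMsub).trans hV.superset)
end
end

section
/- Let V ⊆ ℝ_max^n be the max-plus cone generated by vectors v^1,...,v^p ∈ ℝ^n (all entries finite), and let H = {x ∈ ℝ_max^n : max_{i∈I}(a_i + x_i) ≤ max_{j∈J}(a_j + x_j)}, where I, J are disjoint with I ∪ J = {1,...,n} and a ∈ ℝ^n. Then V ⊆ H if, and only if, ∪_{j∈J} S_j(−a) = {1,...,p}, where −a = (−a_1,...,−a_n). -/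
noncomputable section

/-! `V ⊆ H` can be tested on the generators, since `H` is stable under max-plus linear
combinations. For a finite vector `w`, the inequality defining `H` says exactly that
`max_k (a_k + w_k)` is attained at some `j ∈ J`, because every index lies in `I ∪ J`;
for `w = v^r` this is `r ∈ S_j(-a)`. -/

theorem WithBot.add_finset_sup {α β : Type*} [Add α] [LinearOrder α] [AddLeftMono α]
    (c : WithBot α) (s : Finset β) (f : β → WithBot α) :
    c + s.sup f = s.sup fun x => c + f x := by
  induction s using Finset.cons_induction with
  | empty => simp
  | cons b s _ ih => simp only [Finset.sup_cons, ← ih]; exact add_max ..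

lemma finset_sup_add_sup_comm {ι : Type} [Fintype ι] {p : ℕ} (v : Fin p → ι → ℝ)
    (lam : Fin p → Rmax) (a : ι → ℝ) (K : Finset ι) :
    K.sup (fun i => (a i : Rmax) + Finset.univ.sup fun r => lam r + v r i) =
      Finset.univ.sup fun r => lam r + K.sup fun i => (a i : Rmax) + v r i := by
  simp only [WithBot.add_finset_sup]
  rw [Finset.sup_comm]
  exact Finset.sup_congr rfl fun r _ => Finset.sup_congr rfl fun i _ => add_left_comm ..

lemma coe_mem_genCone {ι : Type} [Fintype ι] {p : ℕ} (v : Fin p → ι → ℝ) (r : Fin p) :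
    (fun i => (v r i : Rmax)) ∈ genCone v := by
  refine ⟨fun s => if s = r then 0 else ⊥, funext fun i => le_antisymm ?_ ?_⟩
  · exact le_trans (by simp) (Finset.le_sup (Finset.mem_univ r))
  · exact Finset.sup_le fun s _ => by by_cases hs : s = r <;> simp [hs]

lemma genCone_subset_halfSpace_iff {ι : Type} [Fintype ι] {p : ℕ} (v : Fin p → ι → ℝ)
    (I J : Finset ι) (a : ι → ℝ) :
    genCone v ⊆ halfSpace I J a ↔ ∀ r, (fun i => (v r i : Rmax)) ∈ halfSpace I J a := by
  refine ⟨fun h r => h (coe_mem_genCone v r), ?_⟩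
  rintro h x ⟨lam, rfl⟩
  simp only [halfSpace, Set.mem_ofPred_eq, finset_sup_add_sup_comm] at h ⊢
  exact Finset.sup_mono_fun fun r _ => add_le_add_right (h r) _

lemma coe_mem_halfSpace_iff {ι : Type} [Fintype ι] [DecidableEq ι] [Nonempty ι] {I J : Finset ι}
    (hU : I ∪ J = Finset.univ) (a x : ι → ℝ) :
    (fun i => (x i : Rmax)) ∈ halfSpace I J a ↔ ∃ j ∈ J, x j + a j = ⨆ k, (x k + a k) := by
  set f : ι → ℝ := fun k => x k + a k
  have hbdd : BddAbove (Set.range f) := (Set.finite_range f).bddAbove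
  have hcoe : ∀ K : Finset ι,
      K.sup (fun i => (a i : Rmax) + x i) = K.sup fun i => ((f i : ℝ) : Rmax) :=
    fun K => Finset.sup_congr rfl fun i _ => by rw [← WithBot.coe_add, add_comm]
  simp only [halfSpace, Set.mem_ofPred_eq, hcoe]
  constructor
  · intro h
    obtain ⟨k, hk⟩ := exists_eq_ciSup_of_finite (f := f)
    rcases Finset.mem_union.mp (hU ▸ Finset.mem_univ k) with hkI | hkJ
    · have hM : ((⨆ k, f k : ℝ) : Rmax) ≤ J.sup fun i => (f i : Rmax) :=
        hk ▸ (Finset.le_sup (f := fun i => (f i : Rmax)) hkI).trans h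
      obtain ⟨j, hj, hjM⟩ := (Finset.le_sup_iff (WithBot.bot_lt_coe _)).mp hM
      exact ⟨j, hj, le_antisymm (le_ciSup hbdd j) (WithBot.coe_le_coe.mp hjM)⟩
    · exact ⟨k, hkJ, hk⟩
  · rintro ⟨j, hj, hjM⟩
    refine Finset.sup_le fun i _ => le_trans ?_ (Finset.le_sup (f := fun i => (f i : Rmax)) hj)
    exact WithBot.coe_le_coe.mpr ((le_ciSup hbdd i).trans_eq hjM.symm)

theorem stmt_10_general {n p : ℕ} (hn : 0 < n) (v : Fin p → Fin n → ℝ)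
    (I J : Finset (Fin n)) (a : Fin n → ℝ)
    (hU : I ∪ J = Finset.univ) :
    genCone v ⊆ halfSpace I J a ↔
      (⋃ j ∈ J, typeSet v (-a) j) = Set.univ := by
  have : Nonempty (Fin n) := ⟨⟨0, hn⟩⟩
  rw [genCone_subset_halfSpace_iff, Set.eq_univ_iff_forall]
  refine forall_congr' fun r => ?_
  rw [coe_mem_halfSpace_iff hU]
  simp only [Set.mem_iUnion, typeSet, Set.mem_ofPred_eq, Pi.neg_apply, sub_neg_eq_add, exists_prop]

/-- `V ⊆ H` iff the sets `S_j(-a)`, `j ∈ J`, cover `{1,…,p}`. -/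
theorem stmt_10 {n p : ℕ} (hn : 0 < n) (v : Fin p → Fin n → ℝ)
    (I J : Finset (Fin n)) (a : Fin n → ℝ) (hIJ : Disjoint I J)
    (hU : I ∪ J = Finset.univ) :
    genCone v ⊆ halfSpace I J a ↔
      (⋃ j ∈ J, typeSet v (-a) j) = Set.univ :=
  stmt_10_general hn v I J a hU
end
end

section
/- Let V ⊆ ℝ_max^n be the max-plus cone generated by vectors v^1,...,v^p ∈ ℝ^n (all entries finite), and let y ∈ ℝ^n be a vector not belonging to V. Then there exists a half-space H containing V but not y whose apex is a vertex of the natural cell decomposition of ℝ_max^n induced by v^1,...,v^p. -/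
noncomputable section

/-!
For an apex `x`, let `B` be the set of maximizers of `y - x`. If every generator `v r` attains
its maximum of `v r - x` somewhere outside `B`, the half-space with `I = B`, `J = Bᶜ` and apex `x`
contains the cone and not `y`; the max-plus projection of `y` onto the cone is such an apex.
Types of points take finitely many values, so among these apexes there is one of maximal type.
Join two coordinates when some generator attains its maximum at both. If this graph were
disconnected, lowering `x` on the component of a point of `B`, or, when that component meets
every generator's maxima, on its complement, would keep the separation property and strictly
enlarge the type. Hence the graph is connected, and then the cell of `x` is the line through `x`.
-/

open Set

section MaxSet

variable {ι : Type} [Finite ι]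

def maxSet (f : ι → ℝ) : Set ι := {k | f k = ⨆ j, f j}

theorem mem_maxSet_iff {f : ι → ℝ} {k : ι} : k ∈ maxSet f ↔ ∀ j, f j ≤ f k := by
  have : Nonempty ι := ⟨k⟩
  refine ⟨fun hk j => hk ▸ le_ciSup (Finite.bddAbove_range f) j, fun hk => ?_⟩
  exact le_antisymm (le_ciSup (Finite.bddAbove_range f) k) (ciSup_le hk)

theorem maxSet_nonempty [Nonempty ι] (f : ι → ℝ) : (maxSet f).Nonempty :=
  exists_eq_ciSup_of_finite

theorem lt_of_mem_maxSet_of_notMem {f : ι → ℝ} {b k : ι} (hb : b ∈ maxSet f)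
    (hk : k ∉ maxSet f) : f k < f b :=
  lt_of_le_of_ne (mem_maxSet_iff.1 hb k) fun h => hk (h.trans hb)

variable {f : ι → ℝ} {C : Set ι} {t : ℝ}

theorem maxSet_subset_maxSet_add_indicator (ht : 0 ≤ t)
    (h : ∀ m ∈ maxSet f, m ∉ C → ∀ k ∈ C, f k + t ≤ f m) :
    maxSet f ⊆ maxSet (f + C.indicator fun _ => t) := by
  intro m hm
  refine mem_maxSet_iff.2 fun j => ?_
  have hjm := mem_maxSet_iff.1 hm j
  by_cases hmC : m ∈ C
  · have := indicator_le_self' (fun _ _ => ht) j (s := C)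
    simp only [Pi.add_apply, indicator_of_mem hmC] at this ⊢
    linarith
  by_cases hjC : j ∈ C
  · simpa only [Pi.add_apply, indicator_of_mem hjC, indicator_of_notMem hmC, add_zero]
      using h m hm hmC j hjC
  · simpa only [Pi.add_apply, indicator_of_notMem hjC, indicator_of_notMem hmC, add_zero]

theorem maxSet_add_indicator_subset_of_mem {b : ι} (ht : 0 ≤ t) (hb : b ∈ maxSet f)
    (hbC : b ∈ C) : maxSet (f + C.indicator fun _ => t) ⊆ maxSet f := by
  intro k hk
  have hbk := mem_maxSet_iff.1 hk b
  have hkt : C.indicator (fun _ => t) k ≤ t := indicator_le_self' (fun _ _ => ht) k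
  simp only [Pi.add_apply, indicator_of_mem hbC] at hbk
  exact mem_maxSet_iff.2 fun j => (mem_maxSet_iff.1 hb j).trans (by linarith)

theorem maxSet_add_indicator_subset_union (ht : 0 ≤ t) :
    maxSet (f + C.indicator fun _ => t) ⊆ maxSet f ∪ C := by
  intro k hk
  refine or_iff_not_imp_right.2 fun hkC => mem_maxSet_iff.2 fun j => ?_
  have hj := mem_maxSet_iff.1 hk j
  have : 0 ≤ C.indicator (fun _ => t) j := indicator_nonneg (fun _ _ => ht) j
  simp only [Pi.add_apply, indicator_of_notMem hkC] at hj
  linarith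

end MaxSet

section Vertex

variable {ι : Type} {p : ℕ} {v : Fin p → ι → ℝ}

theorem mem_typeSet_iff {x : ι → ℝ} {k : ι} {r : Fin p} :
    r ∈ typeSet v x k ↔ k ∈ maxSet fun j => v r j - x j :=
  Iff.rfl

theorem typeSet_const_add [Finite ι] (c : ℝ) (x : ι → ℝ) :
    typeSet v (fun i => c + x i) = typeSet v x := by
  ext k r
  simp only [mem_typeSet_iff, mem_maxSet_iff]
  exact forall_congr' fun j => by constructor <;> intro h <;> linarith

def typeAdj (v : Fin p → ι → ℝ) (x : ι → ℝ) (j k : ι) : Prop :=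
  ∃ r, r ∈ typeSet v x j ∧ r ∈ typeSet v x k

theorem isVertex_of_eqvGen [Finite ι] {x : ι → ℝ} (b : ι)
    (hx : ∀ k, Relation.EqvGen (typeAdj v x) b k) : IsVertex v x := by
  refine Set.Subset.antisymm (fun z hz => ⟨z b - x b, funext fun k => ?_⟩) ?_
  · have key : ∀ j k, Relation.EqvGen (typeAdj v x) j k → z j - x j = z k - x k := by
      intro j k hjk
      induction hjk with
      | rel j k hjk =>
        obtain ⟨r, hj, hk⟩ := hjk
        have hx : v r j - x j = v r k - x k := hj.trans hk.symm
        have hz : v r j - z j = v r k - z k := (hz j hj).trans (hz k hk).symm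
        linarith
      | refl => rfl
      | symm _ _ _ ih => exact ih.symm
      | trans _ _ _ _ _ ih₁ ih₂ => exact ih₁.trans ih₂
    linarith [key b k (hx k)]
  · rintro z ⟨c, rfl⟩ j
    rw [typeSet_const_add]

end Vertex

section Move

variable {ι : Type} {p : ℕ} {v : Fin p → ι → ℝ} {x : ι → ℝ} {C : Set ι}

theorem sub_sub_indicator (w x : ι → ℝ) (C : Set ι) (t : ℝ) :
    (fun k => w k - (x - C.indicator fun _ => t) k) =
      (fun k => w k - x k) + C.indicator fun _ => t := by
  ext k
  simp only [Pi.sub_apply, Pi.add_apply]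
  ring

theorem exists_typeSet_lt_sub_indicator [Finite ι] (hC : C.Nonempty)
    (hclosed : ∀ r j k, r ∈ typeSet v x j → r ∈ typeSet v x k → j ∈ C → k ∈ C)
    (hmiss : ∃ r, ∀ k ∈ C, r ∉ typeSet v x k) :
    ∃ t, 0 ≤ t ∧ typeSet v x < typeSet v (x - C.indicator fun _ => t) := by
  set f : Fin p → ι → ℝ := fun r k => v r k - x k
  set s : Set (Fin p × ι) := {q | q.2 ∈ C ∧ ∀ k ∈ C, q.1 ∉ typeSet v x k}
  have hs : s.Nonempty := by
    obtain ⟨r, hr⟩ := hmiss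
    obtain ⟨k, hk⟩ := hC
    exact ⟨(r, k), hk, hr⟩
  obtain ⟨⟨r₀, k₀⟩, ⟨hk₀, hr₀⟩, hmin⟩ :=
    s.exists_min_image (fun q => (⨆ j, f q.1 j) - f q.1 q.2) s.toFinite hs
  -- the least rise on `C` that lets a generator with no maximum in `C` attain one there
  set t := (⨆ j, f r₀ j) - f r₀ k₀
  have ht : 0 ≤ t := sub_nonneg.2 (le_ciSup (Finite.bddAbove_range _) k₀)
  have hgap : ∀ r k, k ∈ C → (∀ j ∈ C, r ∉ typeSet v x j) → f r k + t ≤ ⨆ j, f r j :=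
    fun r k hk hr => by linarith [hmin (r, k) ⟨hk, hr⟩]
  have hle : typeSet v x ≤ typeSet v (x - C.indicator fun _ => t) := by
    intro k r hr
    rw [mem_typeSet_iff, sub_sub_indicator]
    refine maxSet_subset_maxSet_add_indicator ht (fun m hm hmC j hj => ?_) hr
    exact (hgap r j hj fun l hl hrl => hmC (hclosed r l m hrl hm hl)).trans_eq hm.symm
  refine ⟨t, ht, Pi.lt_def.2 ⟨hle, k₀, (ssubset_iff_of_subset (hle k₀)).2 ⟨r₀, ?_, hr₀ k₀ hk₀⟩⟩⟩
  rw [mem_typeSet_iff, sub_sub_indicator, mem_maxSet_iff]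
  intro j
  simp only [Pi.add_apply, indicator_of_mem hk₀]
  by_cases hj : j ∈ C
  · rw [indicator_of_mem hj]
    linarith [hgap r₀ j hj hr₀]
  · rw [indicator_of_notMem hj]
    linarith [le_ciSup (Finite.bddAbove_range (f r₀)) j]

end Move

section Separation

variable {ι : Type} {p : ℕ} {v : Fin p → ι → ℝ} {y x : ι → ℝ}

/-- The half-space with apex `x`, `I` the set of maximizers of `y - x` and `J` its complement,
contains the generators and not `y`. -/
def IsSeparatingApex (v : Fin p → ι → ℝ) (y x : ι → ℝ) : Prop :=
  ∀ r, ∃ k, r ∈ typeSet v x k ∧ k ∉ maxSet fun j => y j - x j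

theorem IsSeparatingApex.isVertex_or_exists_typeSet_lt [Finite ι] [Nonempty (Fin p)]
    (hx : IsSeparatingApex v y x) :
    IsVertex v x ∨ ∃ x', IsSeparatingApex v y x' ∧ typeSet v x < typeSet v x' := by
  have : Nonempty ι := ⟨(hx (Classical.arbitrary _)).choose⟩
  obtain ⟨b, hb⟩ := maxSet_nonempty fun j => y j - x j
  set K := {k | Relation.EqvGen (typeAdj v x) b k}
  have hK : ∀ r j k, r ∈ typeSet v x j → r ∈ typeSet v x k → j ∈ K → k ∈ K :=
    fun r j k hj hk hjK => .trans _ _ _ hjK (.rel _ _ ⟨r, hj, hk⟩)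
  by_cases hconn : ∀ k, k ∈ K
  · exact .inl (isVertex_of_eqvGen b hconn)
  right
  by_cases hmiss : ∃ r, ∀ k ∈ K, r ∉ typeSet v x k
  · obtain ⟨t, ht, hlt⟩ := exists_typeSet_lt_sub_indicator ⟨b, .refl b⟩ hK hmiss
    refine ⟨_, fun r => ?_, hlt⟩
    obtain ⟨k, hrk, hkB⟩ := hx r
    refine ⟨k, hlt.le k hrk, fun hkB' => hkB ?_⟩
    rw [sub_sub_indicator] at hkB'
    exact maxSet_add_indicator_subset_of_mem ht hb (.refl b) hkB'
  · push Not at hmiss hconn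
    have hKc : ∀ r j k, r ∈ typeSet v x j → r ∈ typeSet v x k → j ∈ Kᶜ → k ∈ Kᶜ :=
      fun r j k hj hk hjK hkK => hjK (hK r k j hk hj hkK)
    have hAK : ∀ r k, r ∈ typeSet v x k → k ∈ K := fun r k hrk => by
      obtain ⟨j, hjK, hrj⟩ := hmiss r
      exact hK r j k hrj hrk hjK
    obtain ⟨t, ht, hlt⟩ := exists_typeSet_lt_sub_indicator (C := Kᶜ) hconn hKc
      ⟨Classical.arbitrary _, fun k hk hrk => hk (hAK _ k hrk)⟩
    refine ⟨_, fun r => ?_, hlt⟩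
    obtain ⟨k, hrk, hkB⟩ := hx r
    refine ⟨k, hlt.le k hrk, fun hkB' => ?_⟩
    rw [sub_sub_indicator] at hkB'
    exact (maxSet_add_indicator_subset_union ht hkB').elim hkB fun hk => hk (hAK r k hrk)

end Separation

section Projection

variable {ι : Type} {p : ℕ} {v : Fin p → ι → ℝ} {y : ι → ℝ}

/-- The greatest element of the cone generated by `v` below `y`. -/
def coneProj (v : Fin p → ι → ℝ) (y : ι → ℝ) (k : ι) : ℝ :=
  ⨆ r, ((⨅ j, (y j - v r j)) + v r k)

theorem coe_coneProj_mem_genCone [Fintype ι] [Nonempty (Fin p)] :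
    (fun k => (coneProj v y k : Rmax)) ∈ genCone v := by
  refine ⟨fun r => ((⨅ j, (y j - v r j) : ℝ) : Rmax), funext fun k => ?_⟩
  rw [coneProj, ← Finset.sup'_univ_eq_ciSup, Finset.coe_sup']
  rfl

variable [Finite ι]

theorem coneProj_le [Nonempty (Fin p)] (k : ι) : coneProj v y k ≤ y k :=
  ciSup_le fun r => by linarith [ciInf_le (Finite.bddBelow_range fun j => y j - v r j) k]

theorem exists_coneProj_eq [Nonempty ι] [Nonempty (Fin p)] (r : Fin p) :
    ∃ k, r ∈ typeSet v (coneProj v y) k ∧ coneProj v y k = y k := by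
  obtain ⟨k, hk⟩ := exists_eq_ciInf_of_finite (f := fun j => y j - v r j)
  have hle : ∀ j, (⨅ j, (y j - v r j)) + v r j ≤ coneProj v y j := fun j =>
    le_ciSup (Finite.bddAbove_range fun r => (⨅ j, (y j - v r j)) + v r j) r
  have hkeq : coneProj v y k = y k := le_antisymm (coneProj_le k) (by linarith [hle k])
  refine ⟨k, mem_typeSet_iff.2 (mem_maxSet_iff.2 fun j => ?_), hkeq⟩
  linarith [hle j]

theorem exists_isSeparatingApex [Fintype ι] [Nonempty (Fin p)]
    (hy : (fun i => (y i : Rmax)) ∉ genCone v) : ∃ x, IsSeparatingApex v y x := by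
  obtain ⟨i, hi⟩ : ∃ i, coneProj v y i < y i := by
    by_contra! h
    have hproj : coneProj v y = y := funext fun i => le_antisymm (coneProj_le i) (h i)
    exact hy (hproj ▸ coe_coneProj_mem_genCone (v := v))
  have : Nonempty ι := ⟨i⟩
  refine ⟨coneProj v y, fun r => ?_⟩
  obtain ⟨k, hrk, hk⟩ := exists_coneProj_eq (v := v) (y := y) r
  refine ⟨k, hrk, fun hkB => ?_⟩
  linarith [mem_maxSet_iff.1 hkB i]

end Projection

theorem exists_isSeparatingApex_isVertex {ι : Type} [Fintype ι] {p : ℕ} [Nonempty (Fin p)]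
    {v : Fin p → ι → ℝ} {y : ι → ℝ} (hy : (fun i => (y i : Rmax)) ∉ genCone v) :
    ∃ x, IsSeparatingApex v y x ∧ IsVertex v x := by
  obtain ⟨x₀, hx₀⟩ := exists_isSeparatingApex hy
  obtain ⟨_, ⟨x, hx, rfl⟩, hmax⟩ :=
    (Set.toFinite (typeSet v '' {x | IsSeparatingApex v y x})).exists_maximal ⟨_, x₀, hx₀, rfl⟩
  refine ⟨x, hx, ?_⟩
  rcases hx.isVertex_or_exists_typeSet_lt with hvert | ⟨x', hx', hlt⟩
  · exact hvert
  · exact absurd (hmax ⟨x', hx', rfl⟩ hlt.le) hlt.not_ge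

section HalfSpace

variable {ι : Type} {p : ℕ} {v : Fin p → ι → ℝ} {y x : ι → ℝ}

theorem genCone_subset_halfSpace [Fintype ι] {I J : Finset ι}
    (hJ : ∀ r, ∃ k ∈ J, ∀ i, v r i - x i ≤ v r k - x k) :
    genCone v ⊆ halfSpace I J (-x) := by
  rintro z ⟨lam, rfl⟩
  rw [halfSpace, Set.mem_ofPred_eq]
  refine Finset.sup_le fun i _ => ?_
  rw [Finset.apply_sup_eq_sup_comp_of_linearOrder (((-x) i : Rmax) + ·)
    (fun _ _ h => add_le_add_right h _) (WithBot.add_bot _)]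
  refine Finset.sup_le fun r _ => ?_
  obtain ⟨k, hkJ, hk⟩ := hJ r
  have hshift : ∀ j, ((-x) j : Rmax) + (lam r + v r j) = lam r + ((v r j - x j : ℝ) : Rmax) :=
    fun j => by rw [sub_eq_neg_add, WithBot.coe_add, Pi.neg_apply]; abel
  calc ((-x) i : Rmax) + (lam r + v r i) = lam r + ((v r i - x i : ℝ) : Rmax) := hshift i
    _ ≤ lam r + ((v r k - x k : ℝ) : Rmax) := by gcongr; exact_mod_cast hk i
    _ = ((-x) k : Rmax) + (lam r + v r k) := (hshift k).symm
    _ ≤ ((-x) k : Rmax) + Finset.univ.sup fun r => lam r + v r k := by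
      gcongr
      exact Finset.le_sup (f := fun r => lam r + v r k) (Finset.mem_univ r)
    _ ≤ _ :=
      Finset.le_sup (f := fun j => ((-x) j : Rmax) + Finset.univ.sup fun r => lam r + v r j) hkJ

theorem coe_notMem_halfSpace {I J : Finset ι} {b : ι} (hb : b ∈ I)
    (hJ : ∀ j ∈ J, y j - x j < y b - x b) :
    (fun i => (y i : Rmax)) ∉ halfSpace I J (-x) := by
  intro hy
  have hcoe : ∀ j, ((-x) j : Rmax) + y j = ((y j - x j : ℝ) : Rmax) := fun j => by
    rw [sub_eq_neg_add, WithBot.coe_add, Pi.neg_apply]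
  have hlt : (J.sup fun j => ((-x) j : Rmax) + y j) < ((y b - x b : ℝ) : Rmax) :=
    (Finset.sup_lt_iff (WithBot.bot_lt_coe _)).2 fun j hj => by
      rw [hcoe]
      exact_mod_cast hJ j hj
  refine (hy.trans_lt hlt).not_ge ?_
  rw [← hcoe]
  exact Finset.le_sup (f := fun i => ((-x) i : Rmax) + y i) hb

end HalfSpace

/-- a point not in the cone can be separated from it by a
half-space whose apex is a vertex of the natural cell decomposition. -/
theorem stmt_14 {n p : ℕ} (hp : 0 < p) (v : Fin p → Fin n → ℝ) (y : Fin n → ℝ)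
    (hy : (fun i => ((y i : ℝ) : Rmax)) ∉ genCone v) :
    ∃ (I J : Finset (Fin n)) (a : Fin n → ℝ), Disjoint I J ∧ I ∪ J = Finset.univ ∧
      genCone v ⊆ halfSpace I J a ∧
      (fun i => ((y i : ℝ) : Rmax)) ∉ halfSpace I J a ∧
      IsVertex v (-a) := by
  classical
  have : Nonempty (Fin p) := ⟨⟨0, hp⟩⟩
  obtain ⟨x, hx, hvert⟩ := exists_isSeparatingApex_isVertex hy
  set B := maxSet fun j => y j - x j
  obtain ⟨b, hb⟩ : B.Nonempty := by
    obtain ⟨k, -, -⟩ := hx ⟨0, hp⟩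
    have : Nonempty (Fin n) := ⟨k⟩
    exact maxSet_nonempty _
  refine ⟨B.toFinset, B.toFinsetᶜ, -x, disjoint_compl_right, Finset.union_compl _, ?_, ?_,
    by rwa [neg_neg]⟩
  · refine genCone_subset_halfSpace fun r => ?_
    obtain ⟨k, hrk, hkB⟩ := hx r
    exact ⟨k, by simpa using hkB, mem_maxSet_iff.1 hrk⟩
  · refine coe_notMem_halfSpace (Set.mem_toFinset.2 hb) fun j hj => ?_
    exact lt_of_mem_maxSet_of_notMem hb (by simpa using hj)
end
end

section
/- Fix a ∈ ℝ^n. Any family of pairwise incomparable (for inclusion) half-spaces of ℝ_max^n all having apex −a has at most C(n, ⌊n/2⌋) members, and this bound is attained: there are exactly C(n, ⌊n/2⌋) maximal pairwise-incomparable half-spaces with apex −a, where C(n,k) denotes the binomial coefficient. -/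
noncomputable section

/-- `H` is a half-space of `ℝ_max^n` with apex `-a`. -/
def HasApex {n : ℕ} (a : Fin n → ℝ) (H : Set (Fin n → Rmax)) : Prop :=
  ∃ I J : Finset (Fin n), Disjoint I J ∧ I ∪ J = Finset.univ ∧ H = halfSpace I J a

/-!
A half-space with apex `-a` is determined by its "right-hand" index set `J`, and
`J ↦ halfSpace Jᶜ J a` is an order embedding of the Boolean lattice of subsets of `{1,…,n}`
into the half-spaces ordered by inclusion: the unit vector `e^j` lies in `halfSpace Jᶜ J a`
exactly when `j ∈ J`. Incomparable families of such half-spaces are therefore Sperner families,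
and the middle layer `#J = ⌊n/2⌋` attains the bound.
-/

open Finset

section Sperner

variable {α β : Type*} [Preorder β]

theorem IsAntichain.ncard_le_choose_of_subset_range [Fintype α] (e : Finset α ↪o β) {F : Set β}
    (hF : IsAntichain (· ≤ ·) F) (hFe : F ⊆ Set.range e) :
    F.ncard ≤ (Fintype.card α).choose (Fintype.card α / 2) := by
  classical
  have hpre : IsAntichain (· ⊆ ·) ((e ⁻¹' F).toFinset : Set (Finset α)) := by
    simpa using hF.preimage_embedding e
  calc F.ncard = (e '' (e ⁻¹' F)).ncard := by rw [Set.image_preimage_eq_of_subset hFe]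
    _ = (e ⁻¹' F).ncard := Set.ncard_image_of_injective _ e.injective
    _ = #(e ⁻¹' F).toFinset := Set.ncard_eq_toFinset_card' _
    _ ≤ _ := hpre.sperner

theorem isAntichain_image_setOf_card_eq (e : Finset α ↪o β) (k : ℕ) :
    IsAntichain (· ≤ ·) (e '' {J | #J = k}) :=
  (Set.Sized.isAntichain fun _ hJ => hJ).image_embedding e

theorem ncard_image_setOf_card_eq [Fintype α] (e : Finset α ↪o β) (k : ℕ) :
    (e '' {J | #J = k}).ncard = (Fintype.card α).choose k := by
  classical
  rw [Set.ncard_image_of_injective _ e.injective, ← card_univ, ← card_powersetCard,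
    ← Set.ncard_coe_finset]
  congr 1
  ext J
  simp

end Sperner

section HalfSpace

variable {ι : Type} [DecidableEq ι]

theorem sup_coe_add_unitVec (s : Finset ι) (c : ι → ℝ) (j : ι) :
    s.sup (fun i => (c i : Rmax) + unitVec j i) = if j ∈ s then (c j : Rmax) else ⊥ := by
  unfold unitVec
  split_ifs with hj
  · refine le_antisymm (Finset.sup_le fun i _ => ?_) (le_of_eq_of_le (by simp) (le_sup hj))
    by_cases hi : i = j <;> simp [hi]
  · refine (Finset.sup_eq_bot_iff _ _).2 fun i hi => ?_
    simp [ne_of_mem_of_not_mem hi hj]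

theorem unitVec_mem_halfSpace_iff (I J : Finset ι) (a : ι → ℝ) (j : ι) :
    unitVec j ∈ halfSpace I J a ↔ (j ∈ I → j ∈ J) := by
  simp only [halfSpace, Set.mem_ofPred_eq, sup_coe_add_unitVec]
  split_ifs <;> simp_all

variable [Fintype ι]

theorem unitVec_mem_halfSpace_compl_iff (J : Finset ι) (a : ι → ℝ) (j : ι) :
    unitVec j ∈ halfSpace Jᶜ J a ↔ j ∈ J := by
  rw [unitVec_mem_halfSpace_iff, mem_compl, not_imp_self]

theorem halfSpace_compl_subset_halfSpace_compl_iff (a : ι → ℝ) {J J' : Finset ι} :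
    halfSpace Jᶜ J a ⊆ halfSpace J'ᶜ J' a ↔ J ⊆ J' := by
  refine ⟨fun h j hj => ?_, fun h x hx => ?_⟩
  · exact (unitVec_mem_halfSpace_compl_iff J' a j).1
      (h ((unitVec_mem_halfSpace_compl_iff J a j).2 hj))
  · simp only [halfSpace, Set.mem_ofPred_eq] at hx ⊢
    exact (sup_mono (compl_subset_compl.2 h)).trans (hx.trans (sup_mono h))

def halfSpaceEmbedding (a : ι → ℝ) : Finset ι ↪o Set (ι → Rmax) :=
  OrderEmbedding.ofMapLEIff (fun J => halfSpace Jᶜ J a)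
    fun _ _ => halfSpace_compl_subset_halfSpace_compl_iff a

end HalfSpace

theorem hasApex_iff {n : ℕ} (a : Fin n → ℝ) (H : Set (Fin n → Rmax)) :
    HasApex a H ↔ H ∈ Set.range (halfSpaceEmbedding a) := by
  constructor
  · rintro ⟨I, J, hdisj, hcover, rfl⟩
    have hI : I = Jᶜ := IsCompl.eq_compl ⟨hdisj, codisjoint_iff.2 hcover⟩
    exact ⟨J, by rw [hI]; rfl⟩
  · rintro ⟨J, rfl⟩
    exact ⟨Jᶜ, J, disjoint_compl_left, compl_sup_eq_top, rfl⟩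

/-- Sperner bound for pairwise incomparable half-spaces with a
given apex, and attainment of the bound. -/
theorem stmt_15 {n : ℕ} (a : Fin n → ℝ) :
    (∀ F : Set (Set (Fin n → Rmax)), (∀ H ∈ F, HasApex a H) →
      F.Pairwise (fun H₁ H₂ => ¬ H₁ ⊆ H₂ ∧ ¬ H₂ ⊆ H₁) →
      F.Finite ∧ F.ncard ≤ n.choose (n / 2)) ∧
    (∃ F : Set (Set (Fin n → Rmax)), (∀ H ∈ F, HasApex a H) ∧
      F.Pairwise (fun H₁ H₂ => ¬ H₁ ⊆ H₂ ∧ ¬ H₂ ⊆ H₁) ∧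
      F.ncard = n.choose (n / 2)) := by
  refine ⟨fun F hF hpair => ?_, ?_⟩
  · have hrange : F ⊆ Set.range (halfSpaceEmbedding a) := fun H hH =>
      (hasApex_iff a H).1 (hF H hH)
    refine ⟨(Set.finite_range _).subset hrange, ?_⟩
    have hanti : IsAntichain (· ⊆ ·) F := fun _ h₁ _ h₂ hne => (hpair h₁ h₂ hne).1
    simpa using hanti.ncard_le_choose_of_subset_range _ hrange
  · refine ⟨halfSpaceEmbedding a '' {J | #J = n / 2}, ?_, ?_, ?_⟩
    · rintro H ⟨J, -, rfl⟩
      exact (hasApex_iff a _).2 ⟨J, rfl⟩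
    · have h := isAntichain_image_setOf_card_eq (halfSpaceEmbedding a) (n / 2)
      exact fun _ h₁ _ h₂ hne => ⟨h h₁ h₂ hne, h h₂ h₁ hne.symm⟩
    · simpa using ncard_image_setOf_card_eq (halfSpaceEmbedding a) (n / 2)
end
end

section
/- Let V ⊆ ℝ_max^n be the max-plus cone generated by vectors v^1,...,v^p ∈ ℝ^n (all entries finite), let i ∈ {1,...,n}, J ⊆ {1,...,n}\{i}, and b_j ∈ ℝ for j ∈ J, and suppose (e^i, ⊕_{j∈J} b_j ⊙ e^j) belongs to the polar V°. Then (e^i, ⊕_{j∈J} b_j ⊙ e^j) is an extreme vector of V° if, and only if, the half-space {x ∈ ℝ_max^{J∪{i}} : x_i ≤ max_{j∈J}(b_j + x_j)} is minimal with respect to the projection of V onto the coordinates indexed by J ∪ {i}. -/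
noncomputable section

/-!
Both sides are equivalent to the irreducibility of the right-hand side `d = ⊕_{j∈J} b_j ⊙ e^j`:
no `c ≤ d` other than `d` itself gives an inequality `x_i ≤ max_j (c_j + x_j)` valid on `V`.
For extremality: `(e^i, d) = (e^i, c) ⊕ (-∞, d)` for every such `c`, and conversely every
decomposition of `(e^i, d)` in the polar has a summand of the form `(e^i, c)` with `c ≤ d`.
For minimality, a valid half-space `{a·y ≤ c·y}` strictly inside `{y_i ≤ d·y}` must have
`c_i < a_i =: α`; shifting `c` by `-α` on the coordinates where `a ≤ c` gives a valid right-hand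
side below `d`, and irreducibility forces `c ≥ α + d` and `a ≤ c` off `i`, which puts the whole
of `{y_i ≤ d·y}` inside `{a·y ≤ c·y}`.
-/

open Finset

lemma WithBot.coe_add_le_iff {α : Type*} [AddGroup α] [LE α] [AddLeftMono α]
    [AddLeftReflectLE α] {a : α} {x y : WithBot α} :
    (a : WithBot α) + x ≤ y ↔ x ≤ ((-a : α) : WithBot α) + y := by
  rw [← WithBot.add_le_add_iff_left (WithBot.coe_ne_bot (a := -a)), ← add_assoc,
    ← WithBot.coe_add, neg_add_cancel, WithBot.coe_zero, zero_add]

lemma Finset.univ_sup_eq_sup_of_eq_bot {ι α : Type*} [Fintype ι] [SemilatticeSup α] [OrderBot α]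
    {s : Finset ι} {f : ι → α} (hf : ∀ k ∉ s, f k = ⊥) : univ.sup f = s.sup f :=
  le_antisymm (Finset.sup_le fun k _ => by
    by_cases hk : k ∈ s
    · exact le_sup hk
    · simp [hf k hk]) (sup_mono (subset_univ s))

section HalfSpace

variable {ι : Type} [Fintype ι]

def tropHalfSpace (a c : ι → Rmax) : Set (ι → Rmax) :=
  {x | univ.sup (fun k => a k + x k) ≤ univ.sup (fun k => c k + x k)}

def unitHalfSpace (i : ι) (d : ι → Rmax) : Set (ι → Rmax) :=
  {y | y i ≤ univ.sup fun k => d k + y k}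

def IsMinimalRHS (V : Set (ι → Rmax)) (i : ι) (d : ι → Rmax) : Prop :=
  ∀ c ≤ d, V ⊆ unitHalfSpace i c → c = d

@[simp]
lemma mem_tropHalfSpace {a c x : ι → Rmax} :
    x ∈ tropHalfSpace a c ↔ univ.sup (fun k => a k + x k) ≤ univ.sup (fun k => c k + x k) :=
  Iff.rfl

@[simp]
lemma mem_unitHalfSpace {i : ι} {d y : ι → Rmax} :
    y ∈ unitHalfSpace i d ↔ y i ≤ univ.sup fun k => d k + y k :=
  Iff.rfl

lemma mem_polar_iff_subset {V : Set (ι → Rmax)} {q : (ι → Rmax) × (ι → Rmax)} :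
    q ∈ polar V ↔ V ⊆ tropHalfSpace q.1 q.2 :=
  Iff.rfl

lemma unitHalfSpace_mono {i : ι} {c d : ι → Rmax} (h : c ≤ d) :
    unitHalfSpace i c ⊆ unitHalfSpace i d :=
  fun _ hy => hy.trans (sup_mono_fun fun k _ => add_le_add_left (h k) _)

lemma unitHalfSpace_subset_tropHalfSpace {i : ι} {a c d : ι → Rmax}
    (hac : ∀ k ≠ i, a k ≤ c k) (had : ∀ k, a i + d k ≤ c k) :
    unitHalfSpace i d ⊆ tropHalfSpace a c := by
  intro y hy
  rw [mem_unitHalfSpace] at hy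
  refine mem_tropHalfSpace.2 (Finset.sup_le fun k _ => ?_)
  by_cases hk : k = i
  · subst hk
    obtain ⟨k', -, hk'⟩ := exists_mem_eq_sup univ ⟨k, mem_univ k⟩ fun k' => d k' + y k'
    calc a k + y k ≤ a k + (d k' + y k') := add_le_add_right (hy.trans hk'.le) _
      _ ≤ c k' + y k' := by rw [← add_assoc]; exact add_le_add_left (had k') _
      _ ≤ _ := le_sup (f := fun k => c k + y k) (mem_univ k')
  · exact (add_le_add_left (hac k hk) _).trans (le_sup (f := fun k => c k + y k) (mem_univ k))

lemma exists_le_of_mem_tropHalfSpace {i : ι} {a c : ι → Rmax} (hca : c i < a i) {y : ι → Rmax}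
    (hy : y ∈ tropHalfSpace a c) (hyi : y i ≠ ⊥) :
    ∃ k ≠ i, a k ≤ c k ∧ a i + y i ≤ c k + y k := by
  obtain ⟨k, -, hk⟩ := exists_mem_eq_sup univ ⟨i, mem_univ i⟩ fun k => c k + y k
  have hle : ∀ k', a k' + y k' ≤ c k + y k := fun k' =>
    (le_sup (f := fun k => a k + y k) (mem_univ k')).trans (hk ▸ hy)
  have hyk : y k ≠ ⊥ := fun hyk => by
    simpa [hyk, hyi, (ne_bot_of_gt hca)] using hle i
  refine ⟨k, ?_, WithBot.le_of_add_le_add_right hyk (hle k), hle i⟩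
  rintro rfl
  exact (WithBot.add_lt_add_right hyi hca).not_ge (hle k)

end HalfSpace

section UnitVec

variable {ι : Type} [DecidableEq ι]

def twoPointVec (i k : ι) (s t : Rmax) : ι → Rmax :=
  fun k' => if k' = i then s else if k' = k then t else ⊥

@[simp]
lemma twoPointVec_left (i k : ι) (s t : Rmax) : twoPointVec i k s t i = s :=
  if_pos rfl

variable [Fintype ι]

lemma sup_add_unitVec (i : ι) (x : ι → Rmax) : univ.sup (fun k => x k + unitVec i k) = x i := by
  rw [univ_sup_eq_sup_of_eq_bot (s := {i}) fun k hk => by simp_all [unitVec]]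
  simp [unitVec]

lemma sup_add_twoPointVec {i k : ι} (hki : k ≠ i) (x : ι → Rmax) (s t : Rmax) :
    univ.sup (fun k' => x k' + twoPointVec i k s t k') = max (x i + s) (x k + t) := by
  rw [univ_sup_eq_sup_of_eq_bot (s := {i, k}) fun k' hk' => by simp_all [twoPointVec]]
  simp [twoPointVec, hki]

lemma tropHalfSpace_unitVec (i : ι) (d : ι → Rmax) :
    tropHalfSpace (unitVec i) d = unitHalfSpace i d := by
  ext y
  rw [mem_tropHalfSpace, mem_unitHalfSpace]
  simp only [add_comm (unitVec i _), sup_add_unitVec]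

lemma isHalfSpace_unitHalfSpace (i : ι) (d : ι → Rmax) : IsHalfSpace (unitHalfSpace i d) :=
  ⟨unitVec i, d, (tropHalfSpace_unitVec i d).symm⟩

lemma unitVec_mem_polar_iff {V : Set (ι → Rmax)} {i : ι} {d : ι → Rmax} :
    (unitVec i, d) ∈ polar V ↔ V ⊆ unitHalfSpace i d := by
  rw [mem_polar_iff_subset, ← tropHalfSpace_unitVec]

end UnitVec

section Extreme

variable {ι : Type} [Fintype ι] [DecidableEq ι] {V : Set (ι → Rmax)} {i : ι} {d : ι → Rmax}

lemma IsMinimalRHS.eq_of_mem_polar (h : IsMinimalRHS V i d) {u : (ι → Rmax) × (ι → Rmax)}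
    (hu : u ∈ polar V) (hu₁ : u.1 ≤ unitVec i) (hu₂ : u.2 ≤ d) (hui : u.1 i = 0) :
    (unitVec i, d) = u := by
  obtain ⟨u₁, u₂⟩ := u
  dsimp only at hu₁ hu₂ hui
  obtain rfl : u₁ = unitVec i := by
    funext k
    by_cases hk : k = i
    · simp [hk, hui, unitVec]
    · exact le_antisymm (hu₁ k) (by simp [unitVec, hk])
  rw [h u₂ hu₂ (unitVec_mem_polar_iff.1 hu)]

theorem isExtremePair_polar_iff (hV : V ⊆ unitHalfSpace i d) :
    IsExtremePair (polar V) (unitVec i, d) ↔ IsMinimalRHS V i d := by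
  constructor
  · rintro ⟨-, -, hext⟩ c hcd hc
    have hbot : ((fun _ => ⊥), d) ∈ polar V := fun x _ => by simp
    rcases hext (unitVec i, c) (unitVec_mem_polar_iff.2 hc) _ hbot
      (by ext k <;> simp [hcd k]) with h | h
    · exact (congrArg Prod.snd h).symm
    · simpa [unitVec] using congrFun (congrArg Prod.fst h) i
  · intro hmin
    refine ⟨unitVec_mem_polar_iff.2 hV,
      fun h => by simpa [unitVec] using congrFun (congrArg Prod.fst h) i, ?_⟩
    rintro u hu w hw huw
    obtain ⟨h₁, h₂⟩ := Prod.ext_iff.1 huw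
    dsimp only at h₁ h₂
    have hi : max (u.1 i) (w.1 i) = 0 := by simpa [unitVec] using (congrFun h₁ i).symm
    rcases max_choice (u.1 i) (w.1 i) with h | h
    · refine .inl <| hmin.eq_of_mem_polar hu ?_ ?_ (h ▸ hi)
      · rw [h₁]; exact fun k => le_max_left _ _
      · rw [h₂]; exact fun k => le_max_left _ _
    · refine .inr <| hmin.eq_of_mem_polar hw ?_ ?_ (h ▸ hi)
      · rw [h₁]; exact fun k => le_max_right _ _
      · rw [h₂]; exact fun k => le_max_right _ _

end Extreme

section Minimal

variable {ι : Type} [Fintype ι] [DecidableEq ι] {V : Set (ι → Rmax)} {i : ι} {a c d : ι → Rmax}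

theorem IsMinimalHalfSpace.isMinimalRHS (hdi : d i = ⊥)
    (hmin : IsMinimalHalfSpace V (unitHalfSpace i d)) : IsMinimalRHS V i d := by
  intro c hcd hc
  by_contra hne
  obtain ⟨k, hk⟩ : ∃ k, c k < d k := by
    by_contra! h
    exact hne (le_antisymm hcd h)
  have hci : c i = ⊥ := le_bot_iff.1 (hdi ▸ hcd i)
  have hki : k ≠ i := by
    rintro rfl
    simp [hci, hdi] at hk
  obtain ⟨δ, hδ⟩ := WithBot.ne_bot_iff_exists.1 (ne_bot_of_gt hk)
  -- the point `e^i ⊕ (-δ) ⊙ e^k` separates the two half-spaces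
  refine hmin.2.2 ⟨_, isHalfSpace_unitHalfSpace i c, hc,
    (Set.ssubset_iff_of_subset (unitHalfSpace_mono hcd)).2
      ⟨twoPointVec i k 0 ((-δ : ℝ) : Rmax), ?_, ?_⟩⟩
  · rw [mem_unitHalfSpace, sup_add_twoPointVec hki, twoPointVec_left, ← hδ, ← WithBot.coe_add,
      add_neg_cancel]
    exact le_max_right _ _
  · rw [mem_unitHalfSpace, sup_add_twoPointVec hki, twoPointVec_left, hci, WithBot.bot_add,
      not_le, max_lt_iff]
    refine ⟨WithBot.bot_lt_coe 0, ?_⟩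
    calc c k + ((-δ : ℝ) : Rmax) < d k + ((-δ : ℝ) : Rmax) :=
          WithBot.add_lt_add_right WithBot.coe_ne_bot hk
      _ = 0 := by rw [← hδ, ← WithBot.coe_add, add_neg_cancel, WithBot.coe_zero]

lemma lt_of_tropHalfSpace_subset (hdi : d i = ⊥) (h : tropHalfSpace a c ⊆ unitHalfSpace i d) :
    c i < a i := by
  by_contra! hac
  have hi : unitVec i ∈ unitHalfSpace i d := h <| by
    rwa [mem_tropHalfSpace, sup_add_unitVec, sup_add_unitVec]
  rw [mem_unitHalfSpace, sup_add_unitVec, hdi] at hi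
  simp [unitVec] at hi

lemma le_coe_add_of_tropHalfSpace_subset (hdi : d i = ⊥)
    (h : tropHalfSpace a c ⊆ unitHalfSpace i d) {α : ℝ} (hα : a i = α) {k : ι} (hki : k ≠ i)
    (hak : a k ≤ c k) : c k ≤ α + d k := by
  induction hck : c k using WithBot.recBotCoe with
  | bot => exact bot_le
  | coe γ =>
    have hy : twoPointVec i k ((γ - α : ℝ) : Rmax) 0 ∈ tropHalfSpace a c := by
      rw [mem_tropHalfSpace, sup_add_twoPointVec hki, sup_add_twoPointVec hki, hα, hck, add_zero,
        add_zero, ← WithBot.coe_add, add_sub_cancel]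
      exact max_le (le_max_right _ _) ((hck ▸ hak).trans (le_max_right _ _))
    have hy' : ((γ - α : ℝ) : Rmax) ≤ d k := by
      simpa [sup_add_twoPointVec hki, hdi] using h hy
    rw [← neg_neg α, ← WithBot.coe_add_le_iff, ← WithBot.coe_add]
    simpa [sub_eq_neg_add] using hy'

theorem IsMinimalRHS.isMinimalHalfSpace (hmin : IsMinimalRHS V i d) (hdi : d i = ⊥)
    (hd : ∀ k ≠ i, d k ≠ ⊥) (hV : V ⊆ unitHalfSpace i d) :
    IsMinimalHalfSpace V (unitHalfSpace i d) := by
  refine ⟨isHalfSpace_unitHalfSpace i d, hV, ?_⟩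
  rintro ⟨_, ⟨a, c, rfl⟩, hVac, hsub, hnot⟩
  apply hnot
  have hca := lt_of_tropHalfSpace_subset hdi hsub
  obtain ⟨α, hα⟩ := WithBot.ne_bot_iff_exists.1 (ne_bot_of_gt hca)
  -- `c - α` on the coordinates `k ≠ i` with `a k ≤ c k`: a valid right-hand side below `d`
  set e : ι → Rmax := fun k => if k ≠ i ∧ a k ≤ c k then ((-α : ℝ) : Rmax) + c k else ⊥
  have hed : e ≤ d := fun k => by
    by_cases hk : k ≠ i ∧ a k ≤ c k
    · simp only [e, if_pos hk]
      rw [WithBot.coe_add_le_iff, neg_neg]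
      exact le_coe_add_of_tropHalfSpace_subset hdi hsub hα.symm hk.1 hk.2
    · simp [e, hk]
  have hVe : V ⊆ unitHalfSpace i e := fun y hy => by
    rw [mem_unitHalfSpace]
    by_cases hyi : y i = ⊥
    · simp [hyi]
    obtain ⟨k, hki, hak, hle⟩ := exists_le_of_mem_tropHalfSpace hca (hVac hy) hyi
    calc y i ≤ ((-α : ℝ) : Rmax) + c k + y k := by
          rw [add_assoc, ← WithBot.coe_add_le_iff, hα]
          exact hle
      _ = e k + y k := by simp [e, hki, hak]
      _ ≤ _ := le_sup (f := fun k => e k + y k) (mem_univ k)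
  have hek : ∀ k ≠ i, a k ≤ c k ∧ ((-α : ℝ) : Rmax) + c k = d k := fun k hki => by
    have h := congrFun (hmin e hed hVe) k
    by_cases hk : a k ≤ c k
    · simp_all [e]
    · simp [e, hk] at h
      exact absurd h.symm (hd k hki)
  refine unitHalfSpace_subset_tropHalfSpace (fun k hki => (hek k hki).1) fun k => ?_
  by_cases hki : k = i
  · simp [hki, hdi]
  · rw [← (hek k hki).2, ← hα, ← add_assoc, ← WithBot.coe_add, add_neg_cancel, WithBot.coe_zero,
      zero_add]

theorem isMinimalHalfSpace_unitHalfSpace_iff (hdi : d i = ⊥) (hd : ∀ k ≠ i, d k ≠ ⊥)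
    (hV : V ⊆ unitHalfSpace i d) :
    IsMinimalHalfSpace V (unitHalfSpace i d) ↔ IsMinimalRHS V i d :=
  ⟨fun h => h.isMinimalRHS hdi, fun h => h.isMinimalHalfSpace hdi hd hV⟩

end Minimal

section Projection

variable {ι : Type} [Fintype ι] {K : Finset ι} {i : ι} {V : Set (ι → Rmax)}

lemma restrict_mem_unitHalfSpace_iff (hi : i ∈ K) {c : ι → Rmax} (hc : ∀ k ∉ K, c k = ⊥)
    (x : ι → Rmax) :
    (fun k : K => x k) ∈ unitHalfSpace ⟨i, hi⟩ (fun k : K => c k) ↔ x ∈ unitHalfSpace i c := by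
  rw [mem_unitHalfSpace, mem_unitHalfSpace, univ_eq_attach,
    sup_attach K fun k => c k + x k, univ_sup_eq_sup_of_eq_bot fun k hk => by simp [hc k hk]]

lemma projCone_subset_unitHalfSpace_iff (hi : i ∈ K) {c : ι → Rmax} (hc : ∀ k ∉ K, c k = ⊥) :
    projCone K V ⊆ unitHalfSpace ⟨i, hi⟩ (fun k : K => c k) ↔ V ⊆ unitHalfSpace i c := by
  constructor
  · intro h x hx
    exact (restrict_mem_unitHalfSpace_iff hi hc x).1 (h ⟨x, hx, rfl⟩)
  · rintro h _ ⟨x, hx, rfl⟩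
    exact (restrict_mem_unitHalfSpace_iff hi hc x).2 (h hx)

variable [DecidableEq ι]

lemma isMinimalRHS_projCone_iff (hi : i ∈ K) {d : ι → Rmax} (hd : ∀ k ∉ K, d k = ⊥) :
    IsMinimalRHS (projCone K V) ⟨i, hi⟩ (fun k : K => d k) ↔ IsMinimalRHS V i d := by
  constructor
  · intro h c hcd hc
    have hcK : ∀ k ∉ K, c k = ⊥ := fun k hk => le_bot_iff.1 (hd k hk ▸ hcd k)
    have hres := h _ (fun k => hcd k) ((projCone_subset_unitHalfSpace_iff hi hcK).2 hc)
    funext k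
    by_cases hk : k ∈ K
    · exact congrFun hres ⟨k, hk⟩
    · rw [hcK k hk, hd k hk]
  · intro h c hcd hc
    set c' : ι → Rmax := fun k => if hk : k ∈ K then c ⟨k, hk⟩ else ⊥
    have hc'K : ∀ k ∉ K, c' k = ⊥ := fun k hk => dif_neg hk
    have hres : (fun k : K => c' k) = c := funext fun k => dif_pos k.2
    have hc'd : c' ≤ d := fun k => by
      by_cases hk : k ∈ K
      · simpa [c', hk] using hcd ⟨k, hk⟩
      · simp [c', hk]
    rw [← hres, h c' hc'd ((projCone_subset_unitHalfSpace_iff hi hc'K).1 (hres ▸ hc))]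

end Projection

/-- `(e^i, ⊕_{j∈J} b_j ⊙ e^j)` is an extreme vector of the polar
iff the half-space `{x : x_i ≤ max_{j∈J}(b_j + x_j)}` of `ℝ_max^{J∪{i}}` is
minimal with respect to the projection of the cone on these coordinates. -/
theorem stmt_19 {n p : ℕ} (v : Fin p → Fin n → ℝ) (i : Fin n)
    (J : Finset (Fin n)) (b : Fin n → ℝ) (hiJ : i ∉ J)
    (hmem : (unitVec i, jVec J b) ∈ polar (genCone v)) :
    IsExtremePair (polar (genCone v)) (unitVec i, jVec J b) ↔
      IsMinimalHalfSpace (projCone (insert i J) (genCone v))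
        {y : {k : Fin n // k ∈ insert i J} → Rmax |
          y ⟨i, Finset.mem_insert_self i J⟩ ≤
            Finset.univ.sup (fun k =>
              (if k.1 ∈ J then ((b k.1 : Rmax)) else ⊥) + y k)} := by
  have hV := unitVec_mem_polar_iff.1 hmem
  have hsupp : ∀ k ∉ insert i J, jVec J b k = ⊥ := fun k hk =>
    if_neg fun hkJ => hk (mem_insert_of_mem hkJ)
  have hbot : ∀ k : {k // k ∈ insert i J}, k ≠ ⟨i, mem_insert_self i J⟩ → jVec J b k ≠ ⊥ :=
    fun k hki => by
      have hkJ := (mem_insert.1 k.2).resolve_left fun h => hki (Subtype.ext h)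
      simp [jVec, hkJ]
  rw [isExtremePair_polar_iff hV, ← isMinimalRHS_projCone_iff (mem_insert_self i J) hsupp]
  have hdi : jVec J b i = ⊥ := if_neg hiJ
  exact (isMinimalHalfSpace_unitHalfSpace_iff (d := fun k : {k // k ∈ insert i J} => jVec J b k)
    hdi hbot ((projCone_subset_unitHalfSpace_iff _ hsupp).2 hV)).symm
end
end
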